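/- arXiv:2402.11544 — 3 statements merged into one kernel-verified Lean document; each statement's English description precedes it below -/
import Mathlib

section
/- Let q be a prime power, n ≥ 2, and e ≥ 1 with gcd(e, n·φ(n)) = 1, where φ is Euler's totient function. Then n_q = n_{q^e}. -/
/-- `NqSpec n q m` says that `m` is the Couveignes–Lercier integer `n_q`: for every prime
`ℓ`, (i) `v_ℓ(m) = v_ℓ(n)` if `ℓ` is coprime to `q - 1`; (ii) `v_ℓ(m) = 0` if `v_ℓ(n) = 0`;
(iii) `v_ℓ(m) = max (2 * v_ℓ(q-1) + 1) (2 * v_ℓ(n))` if `ℓ` divides both `q - 1` and `n`. -/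
def NqSpec (n q m : ℕ) : Prop :=
  ∀ ℓ : ℕ, ℓ.Prime →
    (Nat.Coprime ℓ (q - 1) → m.factorization ℓ = n.factorization ℓ) ∧
    (n.factorization ℓ = 0 → m.factorization ℓ = 0) ∧
    (ℓ ∣ (q - 1) → ℓ ∣ n →
      m.factorization ℓ = max (2 * (q - 1).factorization ℓ + 1) (2 * n.factorization ℓ))

/-!
Only the primes `ℓ ∣ n` matter, and for these `gcd(e, ℓ(ℓ-1)) = 1` because `ℓ(ℓ-1) ∣ n φ(n)`.
Since `x ↦ x^e` is injective on `(ℤ/ℓ)ˣ`, `ℓ ∣ q^e - 1` iff `ℓ ∣ q - 1`; and when `ℓ ∣ q - 1`,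
`q^e - 1 = (q - 1)(1 + q + ⋯ + q^(e-1))` with the second factor `≡ e ≢ 0 (mod ℓ)`, so
`v_ℓ(q^e - 1) = v_ℓ(q - 1)`. Hence the three clauses defining `n_q` and `n_{q^e}` agree.
-/

open Finset

lemma natCast_eq_one_iff_dvd_sub_one {ℓ q : ℕ} (hq : q ≠ 0) : (q : ZMod ℓ) = 1 ↔ ℓ ∣ q - 1 := by
  rw [← Nat.modEq_iff_dvd' (Nat.one_le_iff_ne_zero.2 hq), ← ZMod.natCast_eq_natCast_iff,
    Nat.cast_one, eq_comm]

lemma ZMod.eq_one_of_pow_eq_one_of_coprime {ℓ e : ℕ} [Fact ℓ.Prime] {x : ZMod ℓ} (he : e ≠ 0)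
    (hcop : e.Coprime (ℓ - 1)) (hx : x ^ e = 1) : x = 1 := by
  have hx0 : x ≠ 0 := by
    rintro rfl
    simp [zero_pow he] at hx
  exact (pow_eq_one_iff_of_coprime hcop).1 ⟨hx, ZMod.pow_card_sub_one_eq_one hx0⟩

lemma dvd_pow_sub_one_iff_dvd_sub_one {ℓ q e : ℕ} (hℓ : ℓ.Prime) (he : e ≠ 0)
    (hcop : e.Coprime (ℓ - 1)) : ℓ ∣ q ^ e - 1 ↔ ℓ ∣ q - 1 := by
  have := Fact.mk hℓ
  rcases Nat.eq_zero_or_pos q with rfl | hq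
  · simp [zero_pow he]
  rw [← natCast_eq_one_iff_dvd_sub_one hq.ne', ← natCast_eq_one_iff_dvd_sub_one (by positivity),
    Nat.cast_pow]
  exact ⟨ZMod.eq_one_of_pow_eq_one_of_coprime he hcop, fun h => by rw [h, one_pow]⟩

lemma factorization_pow_sub_one_of_dvd_sub_one {ℓ q e : ℕ} (hℓq : ℓ ∣ q - 1) (hℓe : ¬ ℓ ∣ e) :
    (q ^ e - 1).factorization ℓ = (q - 1).factorization ℓ := by
  have he : e ≠ 0 := fun h => hℓe (h ▸ dvd_zero ℓ)
  rcases Nat.lt_or_ge q 2 with hq | hq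
  · interval_cases q <;> simp [zero_pow he]
  have hq1 : (q : ZMod ℓ) = 1 := (natCast_eq_one_iff_dvd_sub_one (by omega)).2 hℓq
  have hsum_cast : ((∑ i ∈ range e, q ^ i : ℕ) : ZMod ℓ) = e := by
    push_cast [hq1]
    simp
  have hsum : ¬ ℓ ∣ ∑ i ∈ range e, q ^ i := by
    rwa [← ZMod.natCast_eq_zero_iff, hsum_cast, ZMod.natCast_eq_zero_iff]
  have hsum0 : ∑ i ∈ range e, q ^ i ≠ 0 := fun h => hsum (h ▸ dvd_zero ℓ)
  rw [← geom_sum_mul_of_one_le (by omega : 1 ≤ q), Nat.factorization_mul hsum0 (by omega),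
    Finsupp.add_apply, Nat.factorization_eq_zero_of_not_dvd hsum, zero_add]

lemma Nat.Prime.not_dvd_and_coprime_sub_one {ℓ n e : ℕ} (hℓ : ℓ.Prime) (hℓn : ℓ ∣ n)
    (hcop : e.Coprime (n * n.totient)) : ¬ ℓ ∣ e ∧ e.Coprime (ℓ - 1) := by
  have h : e.Coprime (ℓ * ℓ.totient) :=
    hcop.coprime_dvd_right (Nat.mul_dvd_mul hℓn (Nat.totient_dvd_of_dvd hℓn))
  rw [Nat.totient_prime hℓ, Nat.coprime_mul_iff_right] at h
  exact ⟨hℓ.coprime_iff_not_dvd.1 h.1.symm, h.2⟩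

theorem stmt_7_general (n q e m m' : ℕ)
    (hcop : Nat.gcd e (n * Nat.totient n) = 1)
    (hm : 0 < m) (hspec : NqSpec n q m)
    (hm' : 0 < m') (hspec' : NqSpec n (q ^ e) m') : m = m' := by
  refine Nat.eq_of_factorization_eq hm.ne' hm'.ne' fun ℓ => ?_
  by_cases hℓ : ℓ.Prime
  swap
  · simp [Nat.factorization_eq_zero_of_not_prime _ hℓ]
  obtain ⟨hcop₁, hzero₁, hdvd₁⟩ := hspec ℓ hℓ
  obtain ⟨hcop₂, hzero₂, hdvd₂⟩ := hspec' ℓ hℓ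
  by_cases hℓn : ℓ ∣ n
  swap
  · have hv : n.factorization ℓ = 0 := Nat.factorization_eq_zero_of_not_dvd hℓn
    rw [hzero₁ hv, hzero₂ hv]
  obtain ⟨hℓe, hcopℓ⟩ := hℓ.not_dvd_and_coprime_sub_one hℓn hcop
  have he : e ≠ 0 := fun h => hℓe (h ▸ dvd_zero ℓ)
  have hiff : ℓ ∣ q ^ e - 1 ↔ ℓ ∣ q - 1 := dvd_pow_sub_one_iff_dvd_sub_one hℓ he hcopℓ
  by_cases hℓq : ℓ ∣ q - 1
  · rw [hdvd₁ hℓq hℓn, hdvd₂ (hiff.2 hℓq) hℓn, factorization_pow_sub_one_of_dvd_sub_one hℓq hℓe]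
  · rw [hcop₁ (hℓ.coprime_iff_not_dvd.2 hℓq), hcop₂ (hℓ.coprime_iff_not_dvd.2 (mt hiff.1 hℓq))]

/-- If `q` is a prime power, `n ≥ 2`, `e ≥ 1` and `e` is coprime to `n * φ(n)`,
then `n_q = n_{q^e}`. -/
theorem stmt_7 (n q e m m' : ℕ) (hq : IsPrimePow q) (hn : 2 ≤ n) (he : 1 ≤ e)
    (hcop : Nat.gcd e (n * Nat.totient n) = 1)
    (hm : 0 < m) (hspec : NqSpec n q m)
    (hm' : 0 < m') (hspec' : NqSpec n (q ^ e) m') : m = m' :=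
  stmt_7_general n q e m m' hcop hm hspec hm' hspec'
end

section
/- Let n be a positive integer with 8 | n. Then for every positive integer k such that r = nk + 1 is prime, the subgroup of (Z/rZ)* generated by 2 together with the unique subgroup of order k does not equal all of (Z/rZ)*. Equivalently, no Gauss period of type (n,k) generates a normal basis of F_{2^n} over F_2. -/
/-! Since `8 ∣ n`, the prime `r = nk + 1` is `1 mod 8`, so `2` is a quadratic residue mod `r`.
As `n` is even, the subgroup of order `k` lies in the subgroup of squares as well, so `⟨2, K⟩` is
killed by `(r - 1) / 2`, while the cyclic group `(ℤ/rℤ)ˣ` has exponent `r - 1`. -/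

theorem Subgroup.closure_ne_top_of_forall_pow_eq_one {G : Type*} [CommGroup G] {S : Set G}
    {m : ℕ} (hS : ∀ x ∈ S, x ^ m = 1) (hm : ¬ Monoid.exponent G ∣ m) : closure S ≠ ⊤ := by
  intro htop
  refine hm (Monoid.exponent_dvd_iff_forall_pow_eq_one.2 fun g => ?_)
  exact (closure_le (powMonoidHom m : G →* G).ker).2 (fun x hx => MonoidHom.mem_ker.2 (hS x hx))
    (htop ▸ mem_top g)

theorem ZMod.exponent_units (p : ℕ) [Fact p.Prime] : Monoid.exponent (ZMod p)ˣ = p - 1 := by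
  rw [IsCyclic.exponent_eq_card, Nat.card_eq_fintype_card, ZMod.card_units]

theorem ZMod.units_pow_div_two_eq_one_of_val_eq_two {p : ℕ} [Fact p.Prime]
    (hp : p % 8 = 1 ∨ p % 8 = 7) {u : (ZMod p)ˣ} (hu : (u : ZMod p) = 2) : u ^ (p / 2) = 1 := by
  have hsq : IsSquare (u : ZMod p) := hu ▸ (ZMod.exists_sq_eq_two_iff (by omega)).2 hp
  exact Units.ext (by simpa using (ZMod.euler_criterion p u.ne_zero).1 hsq)

theorem stmt_18_general (n : ℕ) (h8 : 8 ∣ n) :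
    ∀ k : ℕ, 0 < k → Nat.Prime (n * k + 1) →
      ∀ u : (ZMod (n * k + 1))ˣ, (u : ZMod (n * k + 1)) = 2 →
        Subgroup.closure (insert u {x : (ZMod (n * k + 1))ˣ | x ^ k = 1}) ≠ ⊤ := by
  intro k _ hp u hu
  have := Fact.mk hp
  obtain ⟨t, rfl⟩ := h8
  have hpos : 0 < t * k := by
    have := hp.two_le
    rw [mul_assoc] at this
    omega
  have hhalf : (8 * t * k + 1) / 2 = 4 * t * k := by rw [mul_assoc, mul_assoc]; omega
  refine Subgroup.closure_ne_top_of_forall_pow_eq_one (m := 4 * t * k) ?_ ?_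
  · rintro x (rfl | hx)
    · have hr8 : (8 * t * k + 1) % 8 = 1 := by rw [mul_assoc]; omega
      exact hhalf ▸ ZMod.units_pow_div_two_eq_one_of_val_eq_two (Or.inl hr8) hu
    · rw [mul_comm (4 * t) k, pow_mul, show x ^ k = 1 from hx, one_pow]
  · rw [ZMod.exponent_units, Nat.add_sub_cancel, mul_assoc, mul_assoc]
    intro hdvd
    have := Nat.le_of_dvd (by omega) hdvd
    omega

/-- If `8 ∣ n`, then for every `k > 0` such that `r = n*k + 1` is prime, the subgroup of
`(ℤ/rℤ)ˣ` generated by `2` together with the unique subgroup of order `k`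
(namely `{x | x ^ k = 1}`) is not all of `(ℤ/rℤ)ˣ`; equivalently, no Gauss period of type
`(n, k)` generates a normal basis of `F_{2^n}` over `F_2`. -/
theorem stmt_18 (n : ℕ) (hn : 0 < n) (h8 : 8 ∣ n) :
    ∀ k : ℕ, 0 < k → Nat.Prime (n * k + 1) →
      ∀ u : (ZMod (n * k + 1))ˣ, (u : ZMod (n * k + 1)) = 2 →
        Subgroup.closure (insert u {x : (ZMod (n * k + 1))ˣ | x ^ k = 1}) ≠ ⊤ :=
  stmt_18_general n h8
end

section
/- Let E be an elliptic curve over F_q, t ∈ E(F_q) a point of order n, H = E/⟨t⟩ with quotient isogeny I : E → H, and a ∈ H(F_q) a point whose fiber I^{-1}(a) is irreducible over F_q (i.e., Frobenius acts transitively on the n geometric points of the fiber). Then for any b ∈ I^{-1}(a), the field F_q(b) is a cyclic extension of F_q of degree n, and translation by t permutes the fiber, realizing the Galois action: the conjugates of b are exactly b + jt for 0 ≤ j ≤ n-1. -/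
/-!
Frobenius moves `b` by `d := σ b - b`, which lies in `ker I = ⟨t⟩` because `a = I b` is rational;
as `t` is rational too, `σ` fixes `d`, so `σ^[j] b = b + j • d` and the orbit of `b` has length
`addOrderOf d`. Transitivity on the fiber puts `b + t` in this orbit, so `t ∈ ⟨d⟩`, whence
`⟨d⟩ = ⟨t⟩` and the orbit length is `n`. The fiber itself is the coset `b + ⟨t⟩`.
-/

section Translation

variable {G F : Type*} [AddCommGroup G] [FunLike F G G] [AddMonoidHomClass F G G]

theorem iterate_eq_add_nsmul_sub {σ : F} {b : G} (h : σ (σ b - b) = σ b - b) (j : ℕ) :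
    (⇑σ)^[j] b = b + j • (σ b - b) := by
  induction j with
  | zero => simp
  | succ k ih =>
    rw [Function.iterate_succ_apply', ih, map_add, map_nsmul, h, succ_nsmul]
    abel

theorem minimalPeriod_eq_addOrderOf_sub {σ : F} {b : G} (h : σ (σ b - b) = σ b - b) :
    Function.minimalPeriod σ b = addOrderOf (σ b - b) := by
  rw [addOrderOf, Function.minimalPeriod_eq_minimalPeriod_iff]
  intro k
  rw [isPeriodicPt_add_iff_nsmul_eq_zero, Function.IsPeriodicPt, Function.IsFixedPt,
    iterate_eq_add_nsmul_sub h, add_eq_left]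

end Translation

theorem AddMonoidHom.apply_eq_apply_iff_of_ker_eq_zmultiples {G H : Type*} [AddCommGroup G]
    [AddCommGroup H] {I : G →+ H} {t : G} (hker : I.ker = AddSubgroup.zmultiples t)
    (ht : IsOfFinAddOrder t) (b c : G) :
    I c = I b ↔ ∃ j < addOrderOf t, c = b + j • t := by
  classical
  rw [← I.sub_mem_ker_iff, hker, ht.mem_zmultiples_iff_mem_range_addOrderOf]
  simp only [Finset.mem_image, Finset.mem_range, eq_sub_iff_add_eq, add_comm b, eq_comm]

/-- Abstract formalization of Couveignes–Lercier: `G = E(closure of F_q)` and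
`H = (E/⟨t⟩)(closure)` are abelian groups with Frobenius automorphisms `σG`, `σH`
(generating the Galois action), and `I : G → H` is the quotient isogeny, equivariant for
Frobenius, with kernel the cyclic group `⟨t⟩` of order `n` generated by the rational
(Frobenius-fixed) point `t`. Let `a` be a rational point of `H` whose fiber `I⁻¹(a)` is
irreducible over `F_q`, i.e. Frobenius acts transitively on it. Then for `b ∈ I⁻¹(a)`,
the field `F_q(b)` is a cyclic extension of `F_q` of degree `n` — i.e. the Frobenius
orbit of `b` has exact length `n` — and translation by `t` realizes the Galois action:
the conjugates of `b` (the points of the fiber) are exactly `b + j • t`, `0 ≤ j ≤ n-1`. -/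
theorem stmt_19 {G H : Type*} [AddCommGroup G] [AddCommGroup H]
    (σG : G ≃+ G) (σH : H ≃+ H) (I : G →+ H)
    (hIσ : ∀ x : G, I (σG x) = σH (I x))
    (n : ℕ) (hn : 0 < n) (t : G) (ht : addOrderOf t = n) (htσ : σG t = t)
    (hker : I.ker = AddSubgroup.zmultiples t)
    (a : H) (ha : σH a = a) (b : G) (hb : I b = a)
    (hirr : ∀ c : G, I c = a → ∃ j : ℕ, (⇑σG)^[j] b = c) :
    Function.minimalPeriod (⇑σG) b = n ∧
      (∀ c : G, I c = a ↔ ∃ j : ℕ, j < n ∧ c = b + j • t) := by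
  subst hb ht
  have hd : σG b - b ∈ AddSubgroup.zmultiples t := by
    rw [← hker, I.sub_mem_ker_iff, hIσ, ha]
  have hσd : σG (σG b - b) = σG b - b := by
    obtain ⟨m, hm⟩ := hd
    rw [← hm, map_zsmul, htσ]
  have ht_mem : t ∈ AddSubgroup.zmultiples (σG b - b) := by
    have hbt : I (b + t) = I b := by
      rw [map_add, add_eq_left, ← I.mem_ker, hker]
      exact AddSubgroup.mem_zmultiples t
    obtain ⟨j, hj⟩ := hirr (b + t) hbt
    rw [iterate_eq_add_nsmul_sub hσd, add_right_inj] at hj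
    exact hj ▸ AddSubgroup.nsmul_mem_zmultiples _ _
  have hzmult : AddSubgroup.zmultiples (σG b - b) = AddSubgroup.zmultiples t :=
    le_antisymm (AddSubgroup.zmultiples_le.mpr hd) (AddSubgroup.zmultiples_le.mpr ht_mem)
  refine ⟨?_, I.apply_eq_apply_iff_of_ker_eq_zmultiples hker (addOrderOf_pos_iff.mp hn) b⟩
  rw [minimalPeriod_eq_addOrderOf_sub hσd, ← Nat.card_zmultiples, hzmult, Nat.card_zmultiples]
end
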